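/- In a group G, suppose elements A_0, A_1, B_0, B_1, C_0, C_1, C_2, C_3, π_0, π_1, π_2, \bar{π}_0, \bar{π}_1, \bar{π}_2 satisfy the relations: π_m² = 1 and \bar{π}_m² = 1 for m = 0,1; π_0 A_0 = A_1 π_1 π_0; π_0 B_0 = B_1 π_1 π_0 (instance of π_q X_q = X_{q+1} π_q π_{q+1}); π_1 A_1 = A_2 π_1 π_2 with A_2 identified via relations; π_0 π_1 π_0 = π_1 π_0 π_1; \bar{π}_1 A_1 = π_1 \bar{π}_2; \bar{π}_0 A_0 = π_0 \bar{π}_1; π_0 \bar{π}_1 π_0 = \bar{π}_1 π_0 \bar{π}_1; A_0 B_1 B_0 = B_0 A_1 A_0 π_1; and X_q Z_m = Z_m X_{q+1}-type conjugation relations identifying Z_{q+1} with A_0^{-q} Z_1 A_0^{q} for Z ∈ {A, B, C, π, \bar{π}}. Then all the listed generators lie in the commutator subgroup of the subgroup they generate; i.e., the group they generate is perfect. -/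

import Mathlib

/-!
Every relation becomes an identity in the abelianization, and there the relations collapse one
family at a time. Conjugating by `A_0` shifts indices, so each family is constant from index `1`
on. Then `π_1 A_1 = A_2 π_1 π_2` gives `π_2 = 1`, and the braid relation gives `π_0 = π_1`.
Next `π̄_1 A_1 = π_1 π̄_2` kills `A_1`, the mixed braid relation kills `π̄_1`, relation 11 at
`m = 0` kills `B_1`, and relations 7 and 9 kill the `C_m`.
-/

section

variable {G H : Type*} [Group G] [CommGroup H] (φ : G →* H)

theorem map_succ_eq_map_one_of_shift {X : ℕ → G} {Y : G}
    (hshift : ∀ q, X (q + 1) * Y = Y * X (q + 2)) (q : ℕ) : φ (X (q + 1)) = φ (X 1) := by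
  induction q with
  | zero => rfl
  | succ q ih =>
    have h := congrArg φ (hshift q)
    rw [map_mul, map_mul, mul_comm (φ Y)] at h
    exact (mul_right_cancel h).symm.trans ih

variable {A B C π π' : ℕ → G}

theorem map_π_eq_one (hA : ∀ q, A (q + 1) * A 0 = A 0 * A (q + 2))
    (hπ : ∀ q, π (q + 1) * A 0 = A 0 * π (q + 2))
    (h3 : π 1 * A 1 = A 2 * π 1 * π 2) (h13 : π 0 * π 1 * π 0 = π 1 * π 0 * π 1) :
    ∀ q, φ (π q) = 1 := by
  have hA2 : φ (A 2) = φ (A 1) := map_succ_eq_map_one_of_shift φ hA 1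
  have hπ2 : φ (π 2) = 1 := by
    have h := congrArg φ h3
    simp only [map_mul, hA2] at h
    rw [mul_comm (φ (A 1)), mul_assoc] at h
    exact mul_eq_left.mp (mul_left_cancel h).symm
  have hπ1 : φ (π 1) = 1 := (map_succ_eq_map_one_of_shift φ hπ 1).symm.trans hπ2
  have hπ0 : φ (π 0) = 1 := by
    have h := congrArg φ h13
    simp only [map_mul, hπ1, mul_one, one_mul] at h
    exact mul_eq_left.mp h
  rintro (_ | q)
  exacts [hπ0, (map_succ_eq_map_one_of_shift φ hπ q).trans hπ1]

theorem map_A_eq_one (hπ : ∀ q, φ (π q) = 1) (hA : ∀ q, A (q + 1) * A 0 = A 0 * A (q + 2))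
    (hπ' : ∀ q, π' (q + 1) * A 0 = A 0 * π' (q + 2))
    (h3 : π 0 * A 0 = A 1 * π 0 * π 1) (h6 : π' 1 * A 1 = π 1 * π' 2) :
    ∀ q, φ (A q) = 1 := by
  have hA1 : φ (A 1) = 1 := by
    have h := congrArg φ h6
    simp only [map_mul, hπ, one_mul, map_succ_eq_map_one_of_shift φ hπ' 1] at h
    exact mul_eq_left.mp h
  have hA0 : φ (A 0) = 1 := by
    have h := congrArg φ h3
    simp only [map_mul, hπ, one_mul, mul_one] at h
    exact h.trans hA1
  rintro (_ | q)
  exacts [hA0, (map_succ_eq_map_one_of_shift φ hA q).trans hA1]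

theorem map_π'_eq_one (hπ : ∀ q, φ (π q) = 1) (hA : ∀ q, φ (A q) = 1)
    (hπ' : ∀ q, π' (q + 1) * A 0 = A 0 * π' (q + 2))
    (h6 : π' 0 * A 0 = π 0 * π' 1) (h15 : π 0 * π' 1 * π 0 = π' 1 * π 0 * π' 1) :
    ∀ q, φ (π' q) = 1 := by
  have hπ'1 : φ (π' 1) = 1 := by
    have h := congrArg φ h15
    simp only [map_mul, hπ, one_mul, mul_one] at h
    exact left_eq_mul.mp h
  have hπ'0 : φ (π' 0) = 1 := by
    have h := congrArg φ h6
    simp only [map_mul, hπ, hA, one_mul, mul_one] at h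
    exact h.trans hπ'1
  rintro (_ | q)
  exacts [hπ'0, (map_succ_eq_map_one_of_shift φ hπ' q).trans hπ'1]

theorem map_B_eq_one (hπ : ∀ q, φ (π q) = 1) (hA : ∀ q, φ (A q) = 1)
    (hB : ∀ q, B (q + 1) * B 0 = B 0 * B (q + 2))
    (h3 : π 0 * B 0 = B 1 * π 0 * π 1) (h11 : A 0 * B 1 * B 0 = B 0 * A 1 * A 0 * π 1) :
    ∀ q, φ (B q) = 1 := by
  have hB1 : φ (B 1) = 1 := by
    have h := congrArg φ h11
    simp only [map_mul, hA, hπ, one_mul, mul_one] at h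
    exact mul_eq_right.mp h
  have hB0 : φ (B 0) = 1 := by
    have h := congrArg φ h3
    simp only [map_mul, hπ, one_mul, mul_one] at h
    exact h.trans hB1
  rintro (_ | q)
  exacts [hB0, (map_succ_eq_map_one_of_shift φ hB q).trans hB1]

theorem map_C_eq_one (hπ : ∀ q, φ (π q) = 1) (hA : ∀ q, φ (A q) = 1) 
    (hB : ∀ q, φ (B q) = 1) (hπ' : ∀ q, φ (π' q) = 1)
    (h7 : ∀ m, π' m * B m = C (m + 1) * π m * π' (m + 1))
    (h9 : C 0 * A 0 = B 0 * C 2 * π 1) :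
    ∀ q, φ (C q) = 1 := by
  have hCsucc (m : ℕ) : φ (C (m + 1)) = 1 := by
    have h := congrArg φ (h7 m)
    simp only [map_mul, hπ, hπ', hB, mul_one] at h
    exact h.symm
  have hC0 : φ (C 0) = 1 := by
    have h := congrArg φ h9
    simp only [map_mul, hA, hB, hπ, hCsucc 1, mul_one] at h
    exact h
  rintro (_ | q)
  exacts [hC0, hCsucc q]

end

theorem brin_relations_perfect_general {G : Type*} [Group G]
    (A B C π π' : ℕ → G)
    (hgen : Subgroup.closure
      (Set.range A ∪ Set.range B ∪ Set.range C ∪ Set.range π ∪ Set.range π')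
        = ⊤)
    -- 1. X_q Y_m = Y_m X_{q+1} for m < q, X, Y ∈ {A, B}
    (r1 : ∀ X Y : ℕ → G, (X = A ∨ X = B) → (Y = A ∨ Y = B) →
      ∀ q m, m < q → X q * Y m = Y m * X (q + 1))
    -- 2. π_q X_m = X_m π_{q+1} for m < q
    (r2 : ∀ X : ℕ → G, (X = A ∨ X = B) →
      ∀ q m, m < q → π q * X m = X m * π (q + 1))
    -- 3. π_q X_q = X_{q+1} π_q π_{q+1}
    (r3 : ∀ X : ℕ → G, (X = A ∨ X = B) →
      ∀ q, π q * X q = X (q + 1) * π q * π (q + 1))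
    -- 5. π̄_q X_m = X_m π̄_{q+1} for m < q
    (r5 : ∀ X : ℕ → G, (X = A ∨ X = B) →
      ∀ q m, m < q → π' q * X m = X m * π' (q + 1))
    -- 6. π̄_m A_m = π_m π̄_{m+1}
    (r6 : ∀ m, π' m * A m = π m * π' (m + 1))
    -- 7. π̄_m B_m = C_{m+1} π_m π̄_{m+1}
    (r7 : ∀ m, π' m * B m = C (m + 1) * π m * π' (m + 1))
    -- 9. C_m A_m = B_m C_{m+2} π_{m+1}
    (r9 : ∀ m, C m * A m = B m * C (m + 2) * π (m + 1))
    -- 11. A_m B_{m+1} B_m = B_m A_{m+1} A_m π_{m+1}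
    (r11 : ∀ m, A m * B (m + 1) * B m = B m * A (m + 1) * A m * π (m + 1))
    -- 13. π_m π_{m+1} π_m = π_{m+1} π_m π_{m+1}
    (r13 : ∀ m, π m * π (m + 1) * π m = π (m + 1) * π m * π (m + 1))
    -- 15. π_m π̄_{m+1} π_m = π̄_{m+1} π_m π̄_{m+1}
    (r15 : ∀ m, π m * π' (m + 1) * π m = π' (m + 1) * π m * π' (m + 1)) :
    commutator G = ⊤ := by
  have hAshift q := r1 A A (.inl rfl) (.inl rfl) (q + 1) 0 q.succ_pos
  have hπ'shift q := r5 A (.inl rfl) (q + 1) 0 q.succ_pos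
  set φ : G →* Abelianization G := Abelianization.of
  have hπ := map_π_eq_one φ hAshift (fun q => r2 A (.inl rfl) (q + 1) 0 q.succ_pos)
    (r3 A (.inl rfl) 1) (r13 0)
  have hA := map_A_eq_one φ hπ hAshift hπ'shift (r3 A (.inl rfl) 0) (r6 1)
  have hπ' := map_π'_eq_one φ hπ hA hπ'shift (r6 0) (r15 0)
  have hB := map_B_eq_one φ hπ hA (fun q => r1 B B (.inr rfl) (.inr rfl) (q + 1) 0 q.succ_pos)
    (r3 B (.inr rfl) 0) (r11 0)
  have hC := map_C_eq_one φ hπ hA hB hπ' r7 (r9 0)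
  have hφ : φ = 1 := MonoidHom.eq_of_eqOn_dense hgen <| by
    rintro x ((((⟨q, rfl⟩ | ⟨q, rfl⟩) | ⟨q, rfl⟩) | ⟨q, rfl⟩) | ⟨q, rfl⟩)
    exacts [hA q, hB q, hC q, hπ q, hπ' q]
  rw [← Abelianization.ker_of, eq_top_iff]
  exact fun x _ => MonoidHom.mem_ker.mpr (DFunLike.congr_fun hφ x)

/-- Brin's relations for `2V`: a group generated by elements `A_i, B_i, C_i,
π_i, π̄_i` subject to the 17 families of relations is perfect (its
abelianization is trivial). -/
theorem brin_relations_perfect {G : Type*} [Group G]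
    (A B C π π' : ℕ → G)
    (hgen : Subgroup.closure
      (Set.range A ∪ Set.range B ∪ Set.range C ∪ Set.range π ∪ Set.range π')
        = ⊤)
    -- 1. X_q Y_m = Y_m X_{q+1} for m < q, X, Y ∈ {A, B}
    (r1 : ∀ X Y : ℕ → G, (X = A ∨ X = B) → (Y = A ∨ Y = B) →
      ∀ q m, m < q → X q * Y m = Y m * X (q + 1))
    -- 2. π_q X_m = X_m π_{q+1} for m < q
    (r2 : ∀ X : ℕ → G, (X = A ∨ X = B) →
      ∀ q m, m < q → π q * X m = X m * π (q + 1))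
    -- 3. π_q X_q = X_{q+1} π_q π_{q+1}
    (r3 : ∀ X : ℕ → G, (X = A ∨ X = B) →
      ∀ q, π q * X q = X (q + 1) * π q * π (q + 1))
    -- 4. π_q X_m = X_m π_q for m > q + 1
    (r4 : ∀ X : ℕ → G, (X = A ∨ X = B) →
      ∀ q m, m > q + 1 → π q * X m = X m * π q)
    -- 5. π̄_q X_m = X_m π̄_{q+1} for m < q
    (r5 : ∀ X : ℕ → G, (X = A ∨ X = B) →
      ∀ q m, m < q → π' q * X m = X m * π' (q + 1))
    -- 6. π̄_m A_m = π_m π̄_{m+1}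
    (r6 : ∀ m, π' m * A m = π m * π' (m + 1))
    -- 7. π̄_m B_m = C_{m+1} π_m π̄_{m+1}
    (r7 : ∀ m, π' m * B m = C (m + 1) * π m * π' (m + 1))
    -- 8. C_q X_m = X_m C_{q+1} for m < q
    (r8 : ∀ X : ℕ → G, (X = A ∨ X = B) →
      ∀ q m, m < q → C q * X m = X m * C (q + 1))
    -- 9. C_m A_m = B_m C_{m+2} π_{m+1}
    (r9 : ∀ m, C m * A m = B m * C (m + 2) * π (m + 1))
    -- 10. π_q C_m = C_m π_q for m > q + 1
    (r10 : ∀ q m, m > q + 1 → π q * C m = C m * π q)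
    -- 11. A_m B_{m+1} B_m = B_m A_{m+1} A_m π_{m+1}
    (r11 : ∀ m, A m * B (m + 1) * B m = B m * A (m + 1) * A m * π (m + 1))
    -- 12. π_q π_m = π_m π_q for |m - q| ≥ 2
    (r12 : ∀ q m, m + 2 ≤ q ∨ q + 2 ≤ m → π q * π m = π m * π q)
    -- 13. π_m π_{m+1} π_m = π_{m+1} π_m π_{m+1}
    (r13 : ∀ m, π m * π (m + 1) * π m = π (m + 1) * π m * π (m + 1))
    -- 14. π̄_q π_m = π_m π̄_q for q ≥ m + 2
    (r14 : ∀ q m, m + 2 ≤ q → π' q * π m = π m * π' q)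
    -- 15. π_m π̄_{m+1} π_m = π̄_{m+1} π_m π̄_{m+1}
    (r15 : ∀ m, π m * π' (m + 1) * π m = π' (m + 1) * π m * π' (m + 1))
    -- 16. π_m² = 1
    (r16 : ∀ m, π m * π m = 1)
    -- 17. π̄_m² = 1
    (r17 : ∀ m, π' m * π' m = 1) :
    commutator G = ⊤ :=
  brin_relations_perfect_general A B C π π' hgen r1 r2 r3 r5 r6 r7 r9 r11 r13 r15
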